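/- Let G = H(T,C) be a generalized Halin graph with positive Lin-Lu-Yau curvature, x a vertex of T of maximum degree D(T). If T has exactly D(T) leaves and D(T) ≥ 4, then every cycle vertex y satisfies d_T(x,y) ≤ 2. -/

import Mathlib

open SimpleGraph

attribute [local instance] Classical.propDecidable

variable {V : Type*}

/-- Normalized graph Laplacian applied to an integer-valued function. -/
noncomputable def lap (G : SimpleGraph V) [∀ v : V, Fintype (G.neighborSet v)]
    (f : V → ℤ) (v : V) : ℝ :=
  (∑ w ∈ G.neighborFinset v, ((f w : ℝ) - (f v : ℝ))) / (G.degree v : ℝ)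

/-- Lin-Lu-Yau curvature via the Laplacian (Münch–Wojciechowski) formulation:
the infimum of `Δf(x) − Δf(y)` over integer-valued functions that are
1-Lipschitz on `N[x] ∪ N[y]` and satisfy `f(y) − f(x) = 1`. -/
noncomputable def kappaLLY (G : SimpleGraph V) [∀ v : V, Fintype (G.neighborSet v)]
    (x y : V) : ℝ :=
  sInf { r : ℝ | ∃ f : V → ℤ,
    (∀ u ∈ insert x (G.neighborSet x) ∪ insert y (G.neighborSet y),
      ∀ v ∈ insert x (G.neighborSet x) ∪ insert y (G.neighborSet y),
        |f u - f v| ≤ (G.dist u v : ℤ)) ∧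
    f y - f x = 1 ∧ r = lap G f x - lap G f y }

/-- The edge `{p,q}` is contained in no triangle and no 4-cycle. -/
def noC3C4 (G : SimpleGraph V) (p q : V) : Prop :=
  (∀ z : V, ¬ (G.Adj p z ∧ G.Adj z q)) ∧
  (∀ u v : V, G.Adj p u → G.Adj u v → G.Adj v q → u = q ∨ v = p)

/-- The wheel graph on `Fin n`: hub `0` joined to the rim cycle `1, …, n-1`. -/
noncomputable def wheel (n : ℕ) : SimpleGraph (Fin n) :=
  SimpleGraph.fromRel (fun a b =>
    a.val = 0 ∨ b.val = a.val + 1 ∨ (a.val = n - 1 ∧ b.val = 1))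

/-- `u` and `v` lie in the same component of `T − x`. -/
def SameComp (T : SimpleGraph V) (x u v : V) : Prop :=
  ∃ w : T.Walk u v, x ∉ w.support

/-- The generalized Halin graph obtained from the tree `T` by joining its
leaves, listed in the cyclic order `σ`, by a cycle. -/
noncomputable def halinGraph (T : SimpleGraph V) {ℓ : ℕ} (σ : ZMod ℓ → V) : SimpleGraph V :=
  T ⊔ SimpleGraph.fromRel (fun a b => ∃ i : ZMod ℓ, a = σ i ∧ b = σ (i + 1))

/-- Distance from a vertex to a set of vertices. -/
noncomputable def distToSet (G : SimpleGraph V) (S : Set V) (z : V) : ℕ :=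
  sInf {d : ℕ | ∃ s ∈ S, d = G.dist z s}

/-!
Suppose a leaf `y` had `d_T(x, y) ≥ 3` and let `x v₁ v₂ v₃` start the tree path to `y`.
Since `#leaves = 2 + ∑_{deg v ≥ 2} (deg v - 2)` in a tree, `#leaves = deg x` forces every vertex
other than `x` to have degree at most `2`; so `v₁, v₂` are inner vertices of degree `2`, and the
edge `v₁x` of `H(T,C)` lies on no triangle or 4-cycle. The test function equal to `0` at `v₁`,
`1` at `x` and `2` at the other neighbours of `x` then gives
`κ(v₁, x) ≤ 1/2 + 2/deg x - 1 ≤ 0`, as `deg x ≥ 4`.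
-/

section EdgeCurvature

variable {G : SimpleGraph V} {p q : V}

lemma SimpleGraph.Adj.reachable_of_mem_union_insert_neighborSet (hpq : G.Adj p q) {v : V}
    (hv : v ∈ insert p (G.neighborSet p) ∪ insert q (G.neighborSet q)) : G.Reachable p v := by
  rcases hv with (rfl | h) | (rfl | h)
  exacts [.refl _, h.reachable, hpq.reachable, hpq.reachable.trans h.reachable]

noncomputable def edgeTestFn (G : SimpleGraph V) (p q z : V) : ℤ :=
  if z = p then 0 else if z = q then 1 else if G.Adj q z then 2 else 0

lemma edgeTestFn_eq_two_iff {z : V} :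
    edgeTestFn G p q z = 2 ↔ z ≠ p ∧ z ≠ q ∧ G.Adj q z := by
  unfold edgeTestFn; split_ifs <;> simp_all

lemma edgeTestFn_mem_Icc (z : V) : edgeTestFn G p q z ∈ Set.Icc 0 2 := by
  unfold edgeTestFn; split_ifs <;> simp

lemma two_le_dist_of_edgeTestFn (hpq : G.Adj p q) (hno : noC3C4 G p q) {u v : V}
    (hv : v ∈ insert p (G.neighborSet p) ∪ insert q (G.neighborSet q))
    (hu2 : edgeTestFn G p q u = 2) (hv0 : edgeTestFn G p q v = 0) : 2 ≤ G.dist u v := by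
  obtain ⟨hup, huq, hqu⟩ := edgeTestFn_eq_two_iff.mp hu2
  have hvq : v ≠ q := by rintro rfl; simp [edgeTestFn, hpq.ne.symm] at hv0
  have hnadj : ¬ G.Adj u v := by
    intro huv
    by_cases hvp : v = p
    · subst hvp; exact hno.1 u ⟨huv.symm, hqu.symm⟩
    have hpv : G.Adj p v := by
      have hqv : ¬ G.Adj q v := fun hqv => by
        simp [edgeTestFn_eq_two_iff.mpr ⟨hvp, hvq, hqv⟩] at hv0
      simpa [hvp, hvq, hqv] using hv
    rcases hno.2 v u hpv huv.symm hqu.symm with h | h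
    exacts [hvq h, hup h]
  have hreach : G.Reachable u v :=
    (hqu.reachable.symm.trans hpq.reachable.symm).trans
      (hpq.reachable_of_mem_union_insert_neighborSet hv)
  exact hreach.one_lt_dist_of_ne_of_not_adj (by rintro rfl; simp_all) hnadj

lemma abs_edgeTestFn_sub_le (hpq : G.Adj p q) (hno : noC3C4 G p q) :
    ∀ u ∈ insert p (G.neighborSet p) ∪ insert q (G.neighborSet q),
      ∀ v ∈ insert p (G.neighborSet p) ∪ insert q (G.neighborSet q),
        |edgeTestFn G p q u - edgeTestFn G p q v| ≤ (G.dist u v : ℤ) := by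
  intro u hu v hv
  rcases eq_or_ne u v with rfl | huv
  · simp
  have hreach : G.Reachable u v := (hpq.reachable_of_mem_union_insert_neighborSet hu).symm.trans
    (hpq.reachable_of_mem_union_insert_neighborSet hv)
  have h1 := hreach.pos_dist_of_ne huv
  have h20 := two_le_dist_of_edgeTestFn hpq hno hv (u := u)
  have h02 := G.dist_comm (u := v) ▸ two_le_dist_of_edgeTestFn hpq hno hu (u := v)
  obtain ⟨hu0, hu2⟩ := edgeTestFn_mem_Icc (G := G) (p := p) (q := q) u
  obtain ⟨hv0, hv2⟩ := edgeTestFn_mem_Icc (G := G) (p := p) (q := q) v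
  rw [abs_le]
  omega

variable [∀ v : V, Fintype (G.neighborSet v)]

lemma abs_lap_le_one {f : V → ℤ} {v : V} (hf : ∀ w, G.Adj v w → |f w - f v| ≤ 1) :
    |lap G f v| ≤ 1 := by
  rw [lap, abs_div, Nat.abs_cast]
  refine div_le_one_of_le₀ ?_ (Nat.cast_nonneg _)
  calc |∑ w ∈ G.neighborFinset v, ((f w : ℝ) - f v)|
      ≤ ∑ w ∈ G.neighborFinset v, |(f w : ℝ) - f v| := Finset.abs_sum_le_sum_abs _ _
    _ ≤ ∑ _w ∈ G.neighborFinset v, (1 : ℝ) :=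
        Finset.sum_le_sum fun w hw => by exact_mod_cast hf w ((G.mem_neighborFinset v w).mp hw)
    _ = G.degree v := by simp

/-- Admissible functions have Laplacians in `[-1, 1]`, so the set defining `kappaLLY` is bounded
below and its infimum is not the junk value `0`. -/
lemma kappaLLY_le_lap_sub (f : V → ℤ)
    (hlip : ∀ u ∈ insert p (G.neighborSet p) ∪ insert q (G.neighborSet q),
      ∀ v ∈ insert p (G.neighborSet p) ∪ insert q (G.neighborSet q),
        |f u - f v| ≤ (G.dist u v : ℤ))
    (hf : f q - f p = 1) : kappaLLY G p q ≤ lap G f p - lap G f q := by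
  refine csInf_le ⟨-2, ?_⟩ ⟨f, hlip, hf, rfl⟩
  rintro _ ⟨g, hg, -, rfl⟩
  have hbound : ∀ v, v = p ∨ v = q → |lap G g v| ≤ 1 := by
    intro v hv
    refine abs_lap_le_one fun w hw => ?_
    have := hg w (by rcases hv with rfl | rfl <;> simp [hw]) v
      (by rcases hv with rfl | rfl <;> simp)
    rwa [SimpleGraph.dist_eq_one_iff_adj.mpr hw.symm] at this
  have hp := abs_le.mp (hbound p (Or.inl rfl))
  have hq := abs_le.mp (hbound q (Or.inr rfl))
  linarith [hp.1, hq.2]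

lemma lap_edgeTestFn_left (hpq : G.Adj p q) (hno : noC3C4 G p q) :
    lap G (edgeTestFn G p q) p = 1 / G.degree p := by
  have hterm : ∀ w ∈ G.neighborFinset p,
      ((edgeTestFn G p q w : ℝ) - edgeTestFn G p q p) = if w = q then 1 else 0 := by
    intro w hw
    rw [mem_neighborFinset] at hw
    have hqw : w ≠ q → ¬ G.Adj q w := fun _ hqw => hno.1 w ⟨hw, hqw.symm⟩
    by_cases hwq : w = q <;> simp [edgeTestFn, hw.ne', hwq, hpq.ne.symm, hqw]
  rw [lap, Finset.sum_congr rfl hterm, Finset.sum_ite_eq',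
    if_pos ((G.mem_neighborFinset p q).mpr hpq)]

lemma lap_edgeTestFn_right (hpq : G.Adj p q) :
    lap G (edgeTestFn G p q) q = (G.degree q - 2) / G.degree q := by
  have hterm : ∀ w ∈ G.neighborFinset q,
      ((edgeTestFn G p q w : ℝ) - edgeTestFn G p q q) = 1 + if w = p then -2 else 0 := by
    intro w hw
    rw [mem_neighborFinset] at hw
    by_cases hwp : w = p
    · norm_num [edgeTestFn, hwp, hpq.ne.symm]
    · norm_num [edgeTestFn, hwp, hw.ne', hw, hpq.ne.symm]
  rw [lap, Finset.sum_congr rfl hterm, Finset.sum_add_distrib, Finset.sum_ite_eq',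
    if_pos ((G.mem_neighborFinset q p).mpr hpq.symm), Finset.sum_const,
    card_neighborFinset_eq_degree, nsmul_eq_mul, mul_one]
  ring

theorem kappaLLY_le_of_noC3C4 (hpq : G.Adj p q) (hno : noC3C4 G p q) :
    kappaLLY G p q ≤ 1 / G.degree p + 2 / G.degree q - 1 := by
  have hq : (G.degree q : ℝ) ≠ 0 := by
    exact_mod_cast ((G.degree_pos_iff_exists_adj q).mpr ⟨p, hpq.symm⟩).ne'
  calc kappaLLY G p q ≤ lap G (edgeTestFn G p q) p - lap G (edgeTestFn G p q) q :=
        kappaLLY_le_lap_sub _ (abs_edgeTestFn_sub_le hpq hno) (by simp [edgeTestFn, hpq.ne.symm])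
    _ = 1 / G.degree p + 2 / G.degree q - 1 := by
        rw [lap_edgeTestFn_left hpq hno, lap_edgeTestFn_right hpq]
        field_simp
        ring

theorem kappaLLY_nonpos_of_noC3C4 (hpq : G.Adj p q) (hno : noC3C4 G p q) (hp : 2 ≤ G.degree p)
    (hq : 4 ≤ G.degree q) : kappaLLY G p q ≤ 0 := by
  have hp' : 1 / (G.degree p : ℝ) ≤ 1 / 2 :=
    one_div_le_one_div_of_le two_pos (by exact_mod_cast hp)
  have hq' : 2 / (G.degree q : ℝ) ≤ 2 / 4 :=
    div_le_div_of_nonneg_left zero_le_two (by norm_num) (by exact_mod_cast hq)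
  linarith [kappaLLY_le_of_noC3C4 hpq hno]

end EdgeCurvature

lemma SimpleGraph.Walk.dist_getVert_of_length_eq_dist {G : SimpleGraph V} {u v : V}
    (P : G.Walk u v) (hP : P.length = G.dist u v) {k : ℕ} (hk : k ≤ P.length) :
    G.dist u (P.getVert k) = k := by
  have := length_eq_dist_of_subwalk hP (P.isSubwalk_take k)
  rwa [Walk.take_length, min_eq_left hk, eq_comm] at this

lemma exists_adj_adj_adj_of_three_le_dist {G : SimpleGraph V} {x y : V} (h : 3 ≤ G.dist x y) :
    ∃ v₁ v₂ v₃, G.Adj x v₁ ∧ G.Adj v₁ v₂ ∧ G.Adj v₂ v₃ ∧ G.dist x v₂ = 2 ∧ G.dist x v₃ = 3 := by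
  obtain ⟨P, hP⟩ := exists_walk_of_dist_ne_zero (by omega : G.dist x y ≠ 0)
  have hdist k (hk : k ≤ 3) := P.dist_getVert_of_length_eq_dist hP (k := k) (by omega)
  refine ⟨P.getVert 1, P.getVert 2, P.getVert 3, ?_, P.adj_getVert_succ (by omega),
    P.adj_getVert_succ (by omega), hdist 2 (by norm_num), hdist 3 le_rfl⟩
  simpa using P.adj_getVert_succ (i := 0) (by omega)

section Neighbours

variable {G : SimpleGraph V} {v a b : V} [Fintype (G.neighborSet v)]

lemma two_le_degree_of_adj (ha : G.Adj v a) (hb : G.Adj v b) (hab : a ≠ b) : 2 ≤ G.degree v := by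
  rw [← card_neighborFinset_eq_degree, ← Finset.card_pair hab]
  exact Finset.card_le_card fun z hz => by
    rcases Finset.mem_insert.mp hz with rfl | hz
    exacts [(G.mem_neighborFinset v z).mpr ha,
      Finset.mem_singleton.mp hz ▸ (G.mem_neighborFinset v b).mpr hb]

lemma eq_or_eq_of_adj_of_degree_le_two (hv : G.degree v ≤ 2) (ha : G.Adj v a) (hb : G.Adj v b)
    (hab : a ≠ b) {z : V} (hz : G.Adj v z) : z = a ∨ z = b := by
  by_contra! h
  have hsub : ({z, a, b} : Finset V) ⊆ G.neighborFinset v := by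
    intro w hw
    simp only [Finset.mem_insert, Finset.mem_singleton] at hw
    rcases hw with rfl | rfl | rfl <;> simpa
  have := Finset.card_le_card hsub
  rw [Finset.card_insert_of_notMem (by simp [h.1, h.2]), Finset.card_pair hab,
    card_neighborFinset_eq_degree] at this
  omega

end Neighbours

lemma noC3C4_of_forall_adj {G : SimpleGraph V} {x v₁ v₂ v₃ : V}
    (h₁ : ∀ z, G.Adj v₁ z → z = x ∨ z = v₂) (h₂ : ∀ z, G.Adj v₂ z → z = v₁ ∨ z = v₃)
    (hx₂ : ¬ G.Adj v₂ x) (hx₃ : ¬ G.Adj v₃ x) : noC3C4 G v₁ x := by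
  refine ⟨fun z ⟨h1z, hzx⟩ => ?_, fun u w h1u huw hwx => ?_⟩
  · rcases h₁ z h1z with rfl | rfl
    exacts [G.loopless.irrefl z hzx, hx₂ hzx]
  · rcases h₁ u h1u with rfl | rfl
    · exact Or.inl rfl
    rcases h₂ w huw with rfl | rfl
    exacts [Or.inr rfl, absurd hwx hx₃]

theorem SimpleGraph.IsTree.degree_le_two_of_ncard_leaves [Fintype V] {T : SimpleGraph V}
    (hT : T.IsTree) {x : V} (hx : 2 ≤ T.degree x)
    (hleaves : {v : V | T.degree v = 1}.ncard = T.degree x) {v : V} (hvx : v ≠ x) :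
    T.degree v ≤ 2 := by
  set excess : V → ℤ := fun w => T.degree w - 2 + if T.degree w = 1 then 1 else 0
  have hdegsum : ∑ w, ((T.degree w : ℤ) - 2) = -2 := by
    have hH : ∑ w, (T.degree w : ℤ) = 2 * T.edgeFinset.card := by
      exact_mod_cast T.sum_degrees_eq_twice_card_edges
    have hE : (T.edgeFinset.card : ℤ) + 1 = Fintype.card V := by exact_mod_cast hT.card_edgeFinset
    rw [Finset.sum_sub_distrib, hH, Finset.sum_const, Finset.card_univ, nsmul_eq_mul, ← hE]
    ring
  have hleafsum : ∑ w, (if T.degree w = 1 then (1 : ℤ) else 0) = T.degree x := by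
    rw [Finset.sum_boole, ← hleaves, Set.ncard_eq_toFinset_card', Set.toFinset_ofPred]
  have hrest : ∑ w ∈ Finset.univ.erase x, excess w = 0 := by
    have := Finset.add_sum_erase Finset.univ excess (Finset.mem_univ x)
    simp only [excess, Finset.sum_add_distrib, hdegsum, hleafsum,
      if_neg (by omega : T.degree x ≠ 1)] at this ⊢
    linarith
  have hnonneg : ∀ w ∈ Finset.univ.erase x, 0 ≤ excess w := by
    intro w hw
    have := (hT.connected w x).degree_pos_left (Finset.ne_of_mem_erase hw)
    simp only [excess]; split_ifs <;> omega
  have := (Finset.sum_eq_zero_iff_of_nonneg hnonneg).mp hrest v (by simp [hvx])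
  simp only [excess] at this
  split_ifs at this <;> omega

lemma halinGraph_adj_iff_of_notMem_range {T : SimpleGraph V} {ℓ : ℕ} {σ : ZMod ℓ → V}
    {v w : V}
    (hv : v ∉ Set.range σ) : (halinGraph T σ).Adj v w ↔ T.Adj v w := by
  refine ⟨fun h => ?_, fun h => Or.inl h⟩
  rcases h with h | ⟨-, ⟨i, rfl, -⟩ | ⟨i, -, rfl⟩⟩
  exacts [h, absurd ⟨i, rfl⟩ hv, absurd ⟨i + 1, rfl⟩ hv]

lemma noC3C4_halinGraph {T : SimpleGraph V} {ℓ : ℕ} {σ : ZMod ℓ → V} {x v₁ v₂ v₃ : V}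
    (hx : x ∉ Set.range σ) (hv₁ : v₁ ∉ Set.range σ) (hv₂ : v₂ ∉ Set.range σ)
    (h₁ : ∀ z, T.Adj v₁ z → z = x ∨ z = v₂) (h₂ : ∀ z, T.Adj v₂ z → z = v₁ ∨ z = v₃)
    (hx₂ : ¬ T.Adj x v₂) (hx₃ : ¬ T.Adj x v₃) : noC3C4 (halinGraph T σ) v₁ x :=
  noC3C4_of_forall_adj (fun z hz => h₁ z ((halinGraph_adj_iff_of_notMem_range hv₁).mp hz))
    (fun z hz => h₂ z ((halinGraph_adj_iff_of_notMem_range hv₂).mp hz))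
    (fun h => hx₂ ((halinGraph_adj_iff_of_notMem_range hv₂).mp h).symm)
    (fun h => hx₃ ((halinGraph_adj_iff_of_notMem_range hx).mp h.symm))

theorem stmt14_general {V : Type*} [Fintype V] (T : SimpleGraph V) (hT : T.IsTree)
    (ℓ : ℕ) (σ : ZMod ℓ → V)
    (hleaf : ∀ v : V, v ∈ Set.range σ ↔ T.degree v = 1)
    (x : V) (hx : 4 ≤ T.degree x)
    (hleaves : {v : V | T.degree v = 1}.ncard = T.degree x)
    (hpos : ∀ u v : V, (halinGraph T σ).Adj u v →
      0 < kappaLLY (halinGraph T σ) u v) :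
    ∀ i : ZMod ℓ, T.dist x (σ i) ≤ 2 := by
  intro i
  by_contra! hfar
  obtain ⟨v₁, v₂, v₃, h₀₁, h₁₂, h₂₃, hd₂, hd₃⟩ := exists_adj_adj_adj_of_three_le_dist hfar
  have hd₁ : T.dist x v₁ = 1 := dist_eq_one_iff_adj.mpr h₀₁
  have hx₂ : x ≠ v₂ := by rintro rfl; simp at hd₂
  have hv₁₃ : v₁ ≠ v₃ := by rintro rfl; omega
  have hnadj {v : V} (hv : 2 ≤ T.dist x v) : ¬ T.Adj x v := fun h => by
    rw [dist_eq_one_iff_adj.mpr h] at hv; omega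
  have hdeg {v : V} (hv : v ≠ x) : T.degree v ≤ 2 :=
    hT.degree_le_two_of_ncard_leaves (by omega) hleaves hv
  have hσ {v : V} (hv : 2 ≤ T.degree v) : v ∉ Set.range σ := fun h => by
    have := (hleaf v).mp h; omega
  have hG₁ : (halinGraph T σ).Adj v₁ x := Or.inl h₀₁.symm
  refine (hpos v₁ x hG₁).not_ge (kappaLLY_nonpos_of_noC3C4 hG₁ ?_ ?_ ?_)
  · exact noC3C4_halinGraph (hσ (by omega)) (hσ (two_le_degree_of_adj h₀₁.symm h₁₂ hx₂))
      (hσ (two_le_degree_of_adj h₁₂.symm h₂₃ hv₁₃))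
      (fun z => eq_or_eq_of_adj_of_degree_le_two (hdeg h₀₁.ne') h₀₁.symm h₁₂ hx₂)
      (fun z => eq_or_eq_of_adj_of_degree_le_two (hdeg hx₂.symm) h₁₂.symm h₂₃ hv₁₃)
      (hnadj (by omega)) (hnadj (by omega))
  · exact two_le_degree_of_adj (G := halinGraph T σ) (Or.inl h₀₁.symm) (Or.inl h₁₂) hx₂
  · exact hx.trans (degree_le_of_le le_sup_left)

theorem stmt14 {V : Type*} [Fintype V] (T : SimpleGraph V) (hT : T.IsTree)
    (ℓ : ℕ) (hℓ : 3 ≤ ℓ) (σ : ZMod ℓ → V) (hinj : Function.Injective σ)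
    (hleaf : ∀ v : V, v ∈ Set.range σ ↔ T.degree v = 1)
    (x : V) (hmax : ∀ v : V, T.degree v ≤ T.degree x) (hx : 4 ≤ T.degree x)
    (hleaves : {v : V | T.degree v = 1}.ncard = T.degree x)
    (hpos : ∀ u v : V, (halinGraph T σ).Adj u v →
      0 < kappaLLY (halinGraph T σ) u v) :
    ∀ i : ZMod ℓ, T.dist x (σ i) ≤ 2 :=
  stmt14_general T hT ℓ σ hleaf x hx hleaves hpos
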